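/- Let G be a graph without isolated vertices and let c be a NAP-colouring of G. Let G_red and G_blue be the subgraphs of G induced by the red and blue edges respectively. Then {G_red, G_blue} is a stable separation of G: they are edge-disjoint with union G, V(G_red) ∩ V(G_blue) is a stable set, and both V(G_red) \ V(G_blue) and V(G_blue) \ V(G_red) are nonempty. -/

import Mathlib

/-!
An edge `uv` joining two vertices that both see red and blue edges would extend, by edges of
the other colour at `u` and at `v`, to a path with alternating colours; its ends are distinct,
as otherwise they would close a triangle that is not monochromatic. So the vertices common to
both colour classes are stable, and then every edge of colour `b` has an endpoint seeing only `b`.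
-/

open scoped Classical

namespace NAC

variable {V : Type*}

/-- Number of edges of `G` in the list `l` whose colour under `c` is `b`. -/
noncomputable def cCount (G : SimpleGraph V) (c : G.edgeSet → Bool) (b : Bool)
    (l : List (Sym2 V)) : ℕ :=
  (l.filter fun e => decide (∃ h : e ∈ G.edgeSet, c ⟨e, h⟩ = b)).length

/-- `c` is a NAC-colouring of `G`: it is surjective (both colours are used) and no
cycle of `G` contains exactly one edge of either colour. -/
def IsNAC (G : SimpleGraph V) (c : G.edgeSet → Bool) : Prop :=
  Function.Surjective c ∧
  ∀ ⦃u : V⦄ (w : G.Walk u u), w.IsCycle →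
    cCount G c true w.edges ≠ 1 ∧ cCount G c false w.edges ≠ 1

/-- The number of NAC-colourings of `G`, divided by two. -/
noncomputable def nacNum (G : SimpleGraph V) : ℕ :=
  {c : G.edgeSet → Bool | IsNAC G c}.ncard / 2

end NAC

namespace NAC

/-- `c` is a NAP-colouring of `G`: it is surjective, every 3-cycle is monochromatic, and
there is no path `(u₁,u₂,u₃,u₄)` of length 3 whose consecutive edges alternate in colour. -/
def IsNAP (G : SimpleGraph V) (c : G.edgeSet → Bool) : Prop :=
  Function.Surjective c ∧
  (∀ (u v w : V) (h1 : G.Adj u v) (h2 : G.Adj v w) (_ : G.Adj w u),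
    c ⟨s(u, v), G.mem_edgeSet.mpr h1⟩ = c ⟨s(v, w), G.mem_edgeSet.mpr h2⟩) ∧
  (∀ (u1 u2 u3 u4 : V) (h1 : G.Adj u1 u2) (h2 : G.Adj u2 u3) (h3 : G.Adj u3 u4),
    u1 ≠ u3 → u2 ≠ u4 → u1 ≠ u4 →
    ¬(c ⟨s(u1, u2), G.mem_edgeSet.mpr h1⟩ ≠ c ⟨s(u2, u3), G.mem_edgeSet.mpr h2⟩ ∧
      c ⟨s(u2, u3), G.mem_edgeSet.mpr h2⟩ ≠ c ⟨s(u3, u4), G.mem_edgeSet.mpr h3⟩))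

end NAC

namespace NAC

/-- The subgraph of `G` spanned by the edges coloured `b` by `c`. -/
def monoSubgraph (G : SimpleGraph V) (c : G.edgeSet → Bool) (b : Bool) : G.Subgraph where
  verts := {x | ∃ y, ∃ h : G.Adj x y, c ⟨s(x, y), G.mem_edgeSet.mpr h⟩ = b}
  Adj u v := ∃ h : G.Adj u v, c ⟨s(u, v), G.mem_edgeSet.mpr h⟩ = b
  adj_sub := by rintro u v ⟨h, -⟩; exact h
  edge_vert := by rintro u v ⟨h, hc⟩; exact ⟨v, h, hc⟩
  symm := by
    refine ⟨?_⟩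
    rintro u v ⟨h, hc⟩
    refine ⟨h.symm, ?_⟩
    have : (⟨s(v, u), G.mem_edgeSet.mpr h.symm⟩ : G.edgeSet)
        = ⟨s(u, v), G.mem_edgeSet.mpr h⟩ := Subtype.ext Sym2.eq_swap
    rw [this]; exact hc

end NAC

namespace NAC

variable {V : Type*} {G : SimpleGraph V} {c : G.edgeSet → Bool}

lemma color_swap (c : G.edgeSet → Bool) {u v : V} (h : G.Adj u v) :
    c ⟨s(v, u), G.mem_edgeSet.mpr h.symm⟩ = c ⟨s(u, v), G.mem_edgeSet.mpr h⟩ :=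
  congrArg c (Subtype.ext Sym2.eq_swap)

lemma disjoint_monoSubgraph_edgeSet {b b' : Bool} (hbb' : b ≠ b') :
    Disjoint (monoSubgraph G c b).edgeSet (monoSubgraph G c b').edgeSet := by
  refine Set.disjoint_left.mpr fun e => ?_
  induction e using Sym2.ind with
  | _ u v =>
    intro hb hb'
    exact hbb' (hb.2.symm.trans hb'.2)

lemma monoSubgraph_edgeSet_union :
    (monoSubgraph G c true).edgeSet ∪ (monoSubgraph G c false).edgeSet = G.edgeSet := by
  ext e
  induction e using Sym2.ind with
  | _ u v =>
    refine ⟨by rintro (⟨h, -⟩ | ⟨h, -⟩) <;> exact h, fun h => ?_⟩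
    cases hb : c ⟨s(u, v), G.mem_edgeSet.mpr h⟩
    · exact Or.inr ⟨h, hb⟩
    · exact Or.inl ⟨h, hb⟩

lemma exists_adj_color_eq_not_of_mem_inter {u : V}
    (hu : u ∈ (monoSubgraph G c true).verts ∩ (monoSubgraph G c false).verts) (b : Bool) :
    ∃ u' : V, ∃ h : G.Adj u u', c ⟨s(u, u'), G.mem_edgeSet.mpr h⟩ = !b := by
  cases b
  · exact hu.1
  · exact hu.2

namespace IsNAP

lemma not_alternating (hc : IsNAP G c) {u v u' v' : V} (h : G.Adj u v)
    (hu : G.Adj u u') (hv : G.Adj v v')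
    (hu' : c ⟨s(u, u'), G.mem_edgeSet.mpr hu⟩ = !c ⟨s(u, v), G.mem_edgeSet.mpr h⟩)
    (hv' : c ⟨s(v, v'), G.mem_edgeSet.mpr hv⟩ = !c ⟨s(u, v), G.mem_edgeSet.mpr h⟩) : False := by
  obtain ⟨-, htri, hpath⟩ := hc
  have hu'v : u' ≠ v := by
    rintro rfl
    exact Bool.not_ne_self _ hu'.symm
  have huv' : u ≠ v' := by
    rintro rfl
    rw [color_swap c h] at hv'
    exact Bool.not_ne_self _ hv'.symm
  have hu'v' : u' ≠ v' := by
    rintro rfl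
    have hmono := htri u v u' h hv hu.symm
    rw [hv'] at hmono
    exact Bool.not_ne_self _ hmono.symm
  refine hpath u' u v v' hu.symm h hv hu'v huv' hu'v' ⟨?_, ?_⟩
  · rw [color_swap c hu, hu']
    exact Bool.not_ne_self _
  · rw [hv']
    exact (Bool.not_ne_self _).symm

lemma not_adj_of_mem_inter (hc : IsNAP G c) :
    ∀ u ∈ (monoSubgraph G c true).verts ∩ (monoSubgraph G c false).verts,
      ∀ v ∈ (monoSubgraph G c true).verts ∩ (monoSubgraph G c false).verts, ¬ G.Adj u v := by
  intro u hu v hv h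
  obtain ⟨u', hu', hcu'⟩ := exists_adj_color_eq_not_of_mem_inter hu (c ⟨s(u, v), _⟩)
  obtain ⟨v', hv', hcv'⟩ := exists_adj_color_eq_not_of_mem_inter hv (c ⟨s(u, v), _⟩)
  exact hc.not_alternating h hu' hv' hcu' hcv'

lemma verts_diff_nonempty (hc : IsNAP G c) (b : Bool) :
    ((monoSubgraph G c b).verts \ (monoSubgraph G c !b).verts).Nonempty := by
  obtain ⟨⟨e, he⟩, hb⟩ := hc.1 b
  induction e using Sym2.ind with
  | _ u v =>
    have h : G.Adj u v := G.mem_edgeSet.mp he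
    have huv : (monoSubgraph G c b).Adj u v := ⟨h, hb⟩
    by_contra hempty
    rw [Set.not_nonempty_iff_eq_empty, Set.sdiff_eq_empty] at hempty
    have hmem : ∀ {w}, w ∈ (monoSubgraph G c b).verts →
        w ∈ (monoSubgraph G c true).verts ∩ (monoSubgraph G c false).verts := fun hw => by
      cases b
      · exact ⟨hempty hw, hw⟩
      · exact ⟨hw, hempty hw⟩
    exact hc.not_adj_of_mem_inter u (hmem huv.fst_mem) v (hmem huv.snd_mem) h

end IsNAP

end NAC

open NAC in
theorem statement3_general {V : Type*} (G : SimpleGraph V)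
    (c : G.edgeSet → Bool) (hc : IsNAP G c) :
    Disjoint (monoSubgraph G c true).edgeSet (monoSubgraph G c false).edgeSet ∧
    (monoSubgraph G c true).edgeSet ∪ (monoSubgraph G c false).edgeSet = G.edgeSet ∧
    (∀ u ∈ (monoSubgraph G c true).verts ∩ (monoSubgraph G c false).verts,
      ∀ v ∈ (monoSubgraph G c true).verts ∩ (monoSubgraph G c false).verts, ¬ G.Adj u v) ∧
    ((monoSubgraph G c true).verts \ (monoSubgraph G c false).verts).Nonempty ∧
    ((monoSubgraph G c false).verts \ (monoSubgraph G c true).verts).Nonempty :=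
  ⟨disjoint_monoSubgraph_edgeSet Bool.true_eq_false.mp, monoSubgraph_edgeSet_union,
    hc.not_adj_of_mem_inter, hc.verts_diff_nonempty true, hc.verts_diff_nonempty false⟩

open NAC in
/-- The red and blue subgraphs of a NAP-colouring form a stable separation. -/
theorem statement3 {V : Type*} (G : SimpleGraph V)
    (hnoiso : ∀ v : V, ∃ u, G.Adj v u)
    (c : G.edgeSet → Bool) (hc : IsNAP G c) :
    Disjoint (monoSubgraph G c true).edgeSet (monoSubgraph G c false).edgeSet ∧
    (monoSubgraph G c true).edgeSet ∪ (monoSubgraph G c false).edgeSet = G.edgeSet ∧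
    (∀ u ∈ (monoSubgraph G c true).verts ∩ (monoSubgraph G c false).verts,
      ∀ v ∈ (monoSubgraph G c true).verts ∩ (monoSubgraph G c false).verts, ¬ G.Adj u v) ∧
    ((monoSubgraph G c true).verts \ (monoSubgraph G c false).verts).Nonempty ∧
    ((monoSubgraph G c false).verts \ (monoSubgraph G c true).verts).Nonempty :=
  statement3_general G c hc
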